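/- Let m ≥ 4 and ε ∈ 𝔽₂. For a subset S ⊆ V^ε with characteristic vector χ_S ∈ 𝔽₂^{V^ε}, put v := Σ_{w∈S} w ∈ 𝔽₂^{2m}. Then the minimum Hamming distance from χ_S to a codeword of C^ε equals: 0 if |S| is even and v = 0; 1 if |S| is odd and θ₀(v) = ε; 2 if |S| is even and v ≠ 0; and 3 if |S| is odd and θ₀(v) = 1 + ε. In particular, every vector of 𝔽₂^{V^ε} is within Hamming distance 3 of C^ε and some vector is at distance exactly 3, i.e. C^ε has covering radius 3. -/

import Mathlib

open Matrix

/-- Row vectors in `𝔽₂^{2m}`, with coordinates indexed by `Fin m ⊕ Fin m`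
(the first block and the second block of `m` coordinates). -/
abbrev Vm (m : ℕ) := (Fin m ⊕ Fin m) → ZMod 2

/-- The block matrix `e = (0 Iₘ; 0 0)`. -/
def eMat (m : ℕ) : Matrix (Fin m ⊕ Fin m) (Fin m ⊕ Fin m) (ZMod 2) :=
  Matrix.fromBlocks 0 1 0 0

/-- The block matrix `f = e + eᵀ = (0 Iₘ; Iₘ 0)`. -/
def fMat (m : ℕ) : Matrix (Fin m ⊕ Fin m) (Fin m ⊕ Fin m) (ZMod 2) :=
  eMat m + (eMat m)ᵀ

/-- The alternating bilinear form `φ(u,v) = u f vᵀ`. -/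
def phi (m : ℕ) (u v : Vm m) : ZMod 2 := u ⬝ᵥ (fMat m).mulVec v

/-- The quadratic form `θ₀(u) = u e uᵀ`. -/
def theta0 (m : ℕ) (u : Vm m) : ZMod 2 := u ⬝ᵥ (eMat m).mulVec u

/-- The quadratic form `θ_a(u) = θ₀(u) + φ(u,a)`. -/
def theta (m : ℕ) (a u : Vm m) : ZMod 2 := theta0 m u + phi m u a

/-- The transvection `t_c : u ↦ u + φ(u,c)·c`. -/
def tvec (m : ℕ) (c u : Vm m) : Vm m := u + phi m u c • c

/-- The point set `V^ε = {v : θ₀(v) = ε}` as a subtype. -/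
abbrev Veps (m : ℕ) (ε : ZMod 2) := {v : Vm m // theta0 m v = ε}

/-- The characteristic vector of a finite set. -/
def chi {α : Type*} [DecidableEq α] (S : Finset α) : α → ZMod 2 :=
  fun x => if x ∈ S then 1 else 0

/-- The code `C^ε`: the `𝔽₂`-span of the characteristic vectors of
4-element subsets of `V^ε` summing to zero. -/
def Ceps (m : ℕ) (ε : ZMod 2) : Submodule (ZMod 2) (Veps m ε → ZMod 2) :=
  Submodule.span (ZMod 2)
    {w | ∃ S : Finset (Veps m ε), S.card = 4 ∧ (∑ x ∈ S, (x : Vm m)) = 0 ∧ w = chi S}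

/-- The code `C^a`: the `𝔽₂`-span of the characteristic vectors of
4-element subsets of `V` summing to zero whose `θ₀`-values sum to zero. -/
def Ca (m : ℕ) : Submodule (ZMod 2) (Vm m → ZMod 2) :=
  Submodule.span (ZMod 2)
    {w | ∃ T : Finset (Vm m), T.card = 4 ∧ (∑ x ∈ T, x) = 0 ∧
         (∑ x ∈ T, theta0 m x) = 0 ∧ w = chi T}

/-!
The code `C^ε` is the kernel of the syndrome map `w ↦ (∑ₓ w x, ∑ₓ w x • x)`. The inclusion `⊆` is
immediate. For `⊇`, work modulo `C^ε`: the class of `e_a + e_b` (unit vectors at `a, b ∈ V^ε`) depends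
only on `a + b`, because two pairs with the same sum make up a zero-sum quadruple; and this class is
additive in `a + b`, because for `u, v` the quadric `V^ε` contains a point `b` with
`b + u, b + v ∈ V^ε` (for `m ≥ 3` the quadric meets every coset of a subspace of codimension at
most two). So the class of an even zero-sum subset is `0`.

The distance from a word to `C^ε` is then the least weight of a word with the same syndrome
`(p, v)`: `0` for `(0, 0)`, `1` for a point `v ∈ V^ε`, `2` for a pair `{a, a + v}` in `V^ε`, and
otherwise `3`, realized by a point `z` together with a pair of sum `v + z`.
-/

lemma eq_of_add_eq_zero_of_zmod_two {G : Type*} [AddCommGroup G] [Module (ZMod 2) G] {x y : G}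
    (h : x + y = 0) : x = y :=
  (eq_neg_of_add_eq_zero_left h).trans (ZModModule.neg_eq_self y)

lemma chi_eq_sum_single {α : Type*} [DecidableEq α] (S : Finset α) :
    chi S = ∑ x ∈ S, Pi.single x (1 : ZMod 2) := by
  ext y
  simp [chi, Finset.sum_apply, Pi.single_apply]

lemma hammingNorm_chi {α : Type*} [Fintype α] [DecidableEq α] (S : Finset α) :
    hammingNorm (chi S) = S.card := by
  simp [hammingNorm, chi]

lemma exists_chi_eq {α : Type*} [Fintype α] [DecidableEq α] (w : α → ZMod 2) :
    ∃ S : Finset α, chi S = w := by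
  refine ⟨Finset.univ.filter (w · ≠ 0), funext fun x => ?_⟩
  by_cases hx : w x = 0
  · simp [chi, hx]
  · rw [chi, if_pos (Finset.mem_filter.mpr ⟨Finset.mem_univ x, hx⟩)]
    exact (Fin.eq_one_of_ne_zero _ hx).symm

section

variable {m : ℕ}

lemma phi_eq_toLinearMap₂' (u v : Vm m) :
    phi m u v = Matrix.toLinearMap₂' (ZMod 2) (fMat m) u v :=
  (Matrix.toLinearMap₂'_apply' _ _ _).symm

lemma phi_add_left (u u' v : Vm m) : phi m (u + u') v = phi m u v + phi m u' v := by
  simp only [phi_eq_toLinearMap₂', map_add, LinearMap.add_apply]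

lemma phi_smul_left (c : ZMod 2) (u v : Vm m) : phi m (c • u) v = c * phi m u v := by
  simp only [phi_eq_toLinearMap₂', map_smul, LinearMap.smul_apply, smul_eq_mul]

lemma phi_add_right (u v v' : Vm m) : phi m u (v + v') = phi m u v + phi m u v' := by
  simp only [phi_eq_toLinearMap₂', map_add]

lemma phi_comm (u v : Vm m) : phi m u v = phi m v u := by
  rw [phi, ← dotProduct_transpose_mulVec]
  simp only [phi, fMat, transpose_add, transpose_transpose, add_comm]

lemma phi_smul_right (c : ZMod 2) (u v : Vm m) : phi m u (c • v) = c * phi m u v := by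
  rw [phi_comm, phi_smul_left, phi_comm]

lemma theta0_add (u v : Vm m) : theta0 m (u + v) = theta0 m u + theta0 m v + phi m u v := by
  simp only [theta0, phi, fMat, add_mulVec, mulVec_add, dotProduct_add, add_dotProduct,
    dotProduct_transpose_mulVec]
  ring

lemma fMat_mul_self : fMat m * fMat m = 1 := by
  simp [fMat, eMat, Matrix.fromBlocks_transpose, Matrix.fromBlocks_add, Matrix.fromBlocks_multiply,
    ← Matrix.fromBlocks_one]

lemma fMat_nondegenerate : (fMat m).Nondegenerate :=
  Matrix.nondegenerate_of_det_ne_zero <| left_ne_zero_of_mul_eq_one (b := (fMat m).det) <| by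
    rw [← det_mul, fMat_mul_self, det_one]

noncomputable abbrev phiForm (m : ℕ) : LinearMap.BilinForm (ZMod 2) (Vm m) :=
  Matrix.toLinearMap₂' (ZMod 2) (fMat m)

lemma phiForm_nondegenerate : (phiForm m).Nondegenerate := fMat_nondegenerate.toLinearMap₂'

lemma theta0_smul (c : ZMod 2) (u : Vm m) : theta0 m (c • u) = c * theta0 m u := by
  have hcc : c * c = c := by revert c; decide
  rw [theta0, mulVec_smul, dotProduct_smul, smul_dotProduct, smul_smul, smul_eq_mul, hcc, theta0]

lemma theta0_add_of_phi_eq {x w : Vm m} (h : phi m x w = theta0 m w) :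
    theta0 m (x + w) = theta0 m x := by
  rw [theta0_add, h, add_assoc, ZModModule.add_self, add_zero]

lemma exists_phi_eq_one {w : Vm m} (hw : w ≠ 0) : ∃ x, phi m x w = 1 := by
  obtain ⟨x, hx⟩ := fMat_nondegenerate.exists_not_ortho_of_ne_zero' hw
  exact ⟨x, Fin.eq_one_of_ne_zero _ hx⟩

lemma exists_phi_eq_of_ne {w₁ w₂ : Vm m} (h₁ : w₁ ≠ 0) (h₂ : w₂ ≠ 0) (h₁₂ : w₁ ≠ w₂)
    (δ₁ δ₂ : ZMod 2) : ∃ x, phi m x w₁ = δ₁ ∧ phi m x w₂ = δ₂ := by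
  obtain ⟨p₁, hp₁⟩ := exists_phi_eq_one h₁
  obtain ⟨p₂, hp₂⟩ := exists_phi_eq_one h₂
  obtain ⟨p₃, hp₃⟩ := exists_phi_eq_one (w := w₁ + w₂)
    (by rwa [← ZModModule.sub_eq_add, sub_ne_zero])
  have hp₃' : phi m p₃ w₂ = 1 + phi m p₃ w₁ := by
    rwa [phi_add_right, add_comm, CharTwo.add_eq_iff_eq_add] at hp₃
  -- on `(w₁, w₂)`, `phi` takes the values `(1, a)`, `(b, 1)`, `(c, 1 + c)` at `p₁, p₂, p₃`,
  -- and any three such vectors span `(ZMod 2)²`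
  have key : ∀ a b c δ₁ δ₂ : ZMod 2, ∃ c₁ c₂ c₃ : ZMod 2,
      c₁ + c₂ * b + c₃ * c = δ₁ ∧ c₁ * a + c₂ + c₃ * (1 + c) = δ₂ := by decide
  obtain ⟨c₁, c₂, c₃, e₁, e₂⟩ := key (phi m p₁ w₂) (phi m p₂ w₁) (phi m p₃ w₁) δ₁ δ₂
  refine ⟨c₁ • p₁ + c₂ • p₂ + c₃ • p₃, ?_, ?_⟩ <;>
    simpa only [phi_add_left, phi_smul_left, hp₁, hp₂, hp₃', mul_one]

lemma exists_hyperbolic_pair_orthogonal (hm : 3 ≤ m) (w₁ w₂ : Vm m) :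
    ∃ u v, phi m u w₁ = 0 ∧ phi m u w₂ = 0 ∧ phi m v w₁ = 0 ∧ phi m v w₂ = 0 ∧ phi m u v = 1 := by
  set K := (phiForm m).orthogonal (Submodule.span (ZMod 2) ↑({w₁, w₂} : Finset (Vm m)))
  -- `K = {w₁, w₂}^⊥` has dimension `≥ 2m - 2 > m`, so it is not totally isotropic
  have hK : 2 * m ≤ Module.finrank (ZMod 2) K + 2 := by
    have := finrank_span_finset_le_card (R := ZMod 2) ({w₁, w₂} : Finset (Vm m))
    rw [Set.finrank] at this
    have := Finset.card_le_two (a := w₁) (b := w₂)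
    rw [LinearMap.BilinForm.finrank_orthogonal phiForm_nondegenerate,
      Module.finrank_fintype_fun_eq_card, Fintype.card_sum, Fintype.card_fin]
    omega
  have hmemK {u : Vm m} (hu : u ∈ K) : phi m u w₁ = 0 ∧ phi m u w₂ = 0 := by
    rw [LinearMap.BilinForm.mem_orthogonal_iff] at hu
    refine ⟨?_, ?_⟩ <;> rw [phi_comm, phi_eq_toLinearMap₂'] <;>
      exact hu _ (Submodule.subset_span (by simp))
  by_contra! h
  have hiso : K ≤ (phiForm m).orthogonal K := fun v hv => by
    refine (LinearMap.BilinForm.mem_orthogonal_iff).mpr fun u hu => ?_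
    have := h u v (hmemK hu).1 (hmemK hu).2 (hmemK hv).1 (hmemK hv).2
    rw [phi_eq_toLinearMap₂'] at this
    by_contra hne
    exact this (Fin.eq_one_of_ne_zero _ hne)
  have := Submodule.finrank_mono hiso
  rw [LinearMap.BilinForm.finrank_orthogonal phiForm_nondegenerate K,
      Module.finrank_fintype_fun_eq_card, Fintype.card_sum, Fintype.card_fin] at this
  omega

lemma exists_theta0_eq (hm : 3 ≤ m) (ε : ZMod 2) (x₀ w₁ w₂ : Vm m) :
    ∃ x, theta0 m x = ε ∧ phi m x w₁ = phi m x₀ w₁ ∧ phi m x w₂ = phi m x₀ w₂ := by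
  obtain ⟨u, v, hu₁, hu₂, hv₁, hv₂, huv⟩ := exists_hyperbolic_pair_orthogonal hm w₁ w₂
  -- moving `x₀` in the plane `⟨u, v⟩ ⟂ w₁, w₂` keeps the `phi`-conditions, and
  -- `θ₀(x₀ + a • u + b • v) = t + a * A + b * B + a * b` takes every value
  have key : ∀ t A B ε : ZMod 2, ∃ a b : ZMod 2, t + a * A + b * B + a * b = ε := by decide
  obtain ⟨a, b, hab⟩ := key (theta0 m x₀) (theta0 m u + phi m x₀ u) (theta0 m v + phi m x₀ v) ε
  refine ⟨x₀ + a • u + b • v, ?_, ?_, ?_⟩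
  · rw [← hab, theta0_add, theta0_add, theta0_smul, theta0_smul, phi_add_left, phi_smul_right,
      phi_smul_right, phi_smul_left, phi_smul_right, huv]
    ring
  all_goals simp only [phi_add_left, phi_smul_left, hu₁, hu₂, hv₁, hv₂, mul_zero, add_zero]

lemma exists_theta0_eq_phi_eq (hm : 3 ≤ m) (ε : ZMod 2) {w : Vm m} (hw : w ≠ 0) (δ : ZMod 2) :
    ∃ x, theta0 m x = ε ∧ phi m x w = δ := by
  obtain ⟨p, hp⟩ := exists_phi_eq_one hw
  obtain ⟨x, hx, hxw, -⟩ := exists_theta0_eq hm ε (δ • p) w w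
  exact ⟨x, hx, by rw [hxw, phi_smul_left, hp, mul_one]⟩

lemma exists_theta0_eq_phi_eq_phi_eq (hm : 3 ≤ m) (ε : ZMod 2) {w₁ w₂ : Vm m} (h₁ : w₁ ≠ 0)
    (h₂ : w₂ ≠ 0) (h₁₂ : w₁ ≠ w₂) (δ₁ δ₂ : ZMod 2) :
    ∃ x, theta0 m x = ε ∧ phi m x w₁ = δ₁ ∧ phi m x w₂ = δ₂ := by
  obtain ⟨x₀, hx₀₁, hx₀₂⟩ := exists_phi_eq_of_ne h₁ h₂ h₁₂ δ₁ δ₂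
  obtain ⟨x, hx, hx₁, hx₂⟩ := exists_theta0_eq hm ε x₀ w₁ w₂
  exact ⟨x, hx, hx₁.trans hx₀₁, hx₂.trans hx₀₂⟩

lemma exists_ne_add_eq (hm : 3 ≤ m) (ε : ZMod 2) {w : Vm m} (hw : w ≠ 0) :
    ∃ a b : Veps m ε, a ≠ b ∧ (a : Vm m) + b = w := by
  obtain ⟨x, hx, hxw⟩ := exists_theta0_eq_phi_eq hm ε hw (theta0 m w)
  refine ⟨⟨x, hx⟩, ⟨x + w, (theta0_add_of_phi_eq hxw).trans hx⟩, ?_, ?_⟩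
  · simpa [Subtype.ext_iff] using hw
  · rw [← add_assoc, ZModModule.add_self, zero_add]

variable {ε : ZMod 2}

noncomputable def syndrome (m : ℕ) (ε : ZMod 2) :
    (Veps m ε → ZMod 2) →ₗ[ZMod 2] ZMod 2 × Vm m :=
  Fintype.linearCombination (ZMod 2) fun x => (1, (x : Vm m))

lemma syndrome_apply (w : Veps m ε → ZMod 2) :
    syndrome m ε w = (∑ x, w x, ∑ x, w x • (x : Vm m)) := by
  simp [syndrome, Fintype.linearCombination_apply, prod_mk_sum]

lemma syndrome_chi (S : Finset (Veps m ε)) :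
    syndrome m ε (chi S) = ((S.card : ZMod 2), ∑ x ∈ S, (x : Vm m)) := by
  simp [syndrome_apply, chi, ite_smul, Finset.sum_ite_mem]

lemma Ceps_le_ker_syndrome : Ceps m ε ≤ LinearMap.ker (syndrome m ε) := by
  refine Submodule.span_le.mpr ?_
  rintro _ ⟨S, hcard, hsum, rfl⟩
  rw [SetLike.mem_coe, LinearMap.mem_ker, syndrome_chi, hcard, hsum]
  rfl

lemma single_add_single_sub_mem_Ceps {a b c d : Veps m ε} (h : (a : Vm m) + b = c + d) :
    (Pi.single a 1 + Pi.single b 1) - (Pi.single c 1 + Pi.single d 1) ∈ Ceps m ε := by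
  by_cases hac : a = c
  · subst hac
    simp [Subtype.ext (add_left_cancel h)]
  by_cases had : a = d
  · subst had
    simp [Subtype.ext (add_left_cancel (h.trans (add_comm _ _))), add_comm]
  by_cases hab : a = b
  · subst hab
    rw [ZModModule.add_self, eq_comm] at h
    simp [Subtype.ext (eq_of_add_eq_zero_of_zmod_two h), ZModModule.add_self]
  have hbc : b ≠ c := by
    rintro rfl
    exact had (Subtype.ext (add_right_cancel (h.trans (add_comm _ _))))
  have hbd : b ≠ d := by
    rintro rfl
    exact hac (Subtype.ext (add_right_cancel h))
  have hcd : c ≠ d := by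
    rintro rfl
    rw [ZModModule.add_self] at h
    exact hab (Subtype.ext (eq_of_add_eq_zero_of_zmod_two h))
  rw [ZModModule.sub_eq_add, ← add_assoc]
  refine Submodule.subset_span ⟨{a, b, c, d}, ?_, ?_, ?_⟩
  · simp [Finset.card_insert_of_notMem, *]
  · simp only [Finset.sum_insert, Finset.mem_insert, Finset.mem_singleton, Finset.sum_singleton,
      *, not_false_eq_true, or_self]
    rw [← add_assoc, h, ZModModule.add_self]
  · simp [chi_eq_sum_single, Finset.sum_insert, *, add_assoc]

-- independent of the chosen pair, by `pairClass_eq`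
noncomputable def pairClass (m : ℕ) (ε : ZMod 2) (w : Vm m) : (Veps m ε → ZMod 2) ⧸ Ceps m ε :=
  if h : ∃ p : Veps m ε × Veps m ε, (p.1 : Vm m) + p.2 = w then
    (Ceps m ε).mkQ (Pi.single h.choose.1 1 + Pi.single h.choose.2 1)
  else 0

lemma pairClass_eq {a b : Veps m ε} {w : Vm m} (h : (a : Vm m) + b = w) :
    pairClass m ε w = (Ceps m ε).mkQ (Pi.single a 1 + Pi.single b 1) := by
  have hw : ∃ p : Veps m ε × Veps m ε, (p.1 : Vm m) + p.2 = w := ⟨(a, b), h⟩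
  rw [pairClass, dif_pos hw, Submodule.mkQ_apply, Submodule.mkQ_apply, Submodule.Quotient.eq]
  exact single_add_single_sub_mem_Ceps (hw.choose_spec.trans h.symm)

lemma pairClass_zero : pairClass m ε 0 = 0 := by
  by_cases h : ∃ p : Veps m ε × Veps m ε, (p.1 : Vm m) + p.2 = 0
  · obtain ⟨⟨a, -⟩, -⟩ := h
    rw [pairClass_eq (ZModModule.add_self (a : Vm m)), ZModModule.add_self, map_zero]
  · rw [pairClass, dif_neg h]

lemma pairClass_add (hm : 3 ≤ m) (u v : Vm m) :
    pairClass m ε (u + v) = pairClass m ε u + pairClass m ε v := by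
  by_cases hu : u = 0
  · rw [hu, zero_add, pairClass_zero, zero_add]
  by_cases hv : v = 0
  · rw [hv, add_zero, pairClass_zero, add_zero]
  by_cases huv : u = v
  · rw [huv, ZModModule.add_self, ZModModule.add_self, pairClass_zero]
  -- `b + u, b, b + v` are points of `V^ε` with consecutive differences `u` and `v`
  obtain ⟨b, hb, hbu, hbv⟩ :=
    exists_theta0_eq_phi_eq_phi_eq hm ε hu hv huv (theta0 m u) (theta0 m v)
  let a : Veps m ε := ⟨b + u, (theta0_add_of_phi_eq hbu).trans hb⟩
  let c : Veps m ε := ⟨b + v, (theta0_add_of_phi_eq hbv).trans hb⟩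
  let b' : Veps m ε := ⟨b, hb⟩
  rw [pairClass_eq (a := a) (b := c) (by simp only [a, c]; rw [add_add_add_comm,
      ZModModule.add_self, zero_add]),
    pairClass_eq (a := a) (b := b') (by simp only [a, b']; rw [add_comm b, add_assoc,
      ZModModule.add_self, add_zero]),
    pairClass_eq (a := b') (b := c) (by simp only [b', c]; rw [← add_assoc, ZModModule.add_self,
      zero_add]),
    ← map_add, ZModModule.add_add_add_cancel]

noncomputable def pairClassHom (hm : 3 ≤ m) (ε : ZMod 2) :
    Vm m →ₗ[ZMod 2] (Veps m ε → ZMod 2) ⧸ Ceps m ε :=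
  (AddMonoidHom.mk' (pairClass m ε) (pairClass_add hm)).toZModLinearMap 2

lemma mkQ_eq_pairClassHom (hm : 3 ≤ m) (p : Veps m ε) (w : Veps m ε → ZMod 2) :
    (Ceps m ε).mkQ w = pairClassHom hm ε (∑ x, w x • ((x : Vm m) + p)) +
      (∑ x, w x) • (Ceps m ε).mkQ (Pi.single p 1) := by
  have hsingle (x : Veps m ε) : (Ceps m ε).mkQ (Pi.single x 1) =
      pairClassHom hm ε (x + p) + (Ceps m ε).mkQ (Pi.single p 1) := by
    rw [pairClassHom, AddMonoidHom.coe_toZModLinearMap, AddMonoidHom.mk'_apply,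
      pairClass_eq rfl, ← map_add, add_assoc, ZModModule.add_self, add_zero]
  calc (Ceps m ε).mkQ w = ∑ x, w x • (Ceps m ε).mkQ (Pi.single x 1) := by
        conv_lhs => rw [pi_eq_sum_univ' w]
        simp only [map_sum, map_smul]
    _ = ∑ x, w x • (pairClassHom hm ε (x + p) + (Ceps m ε).mkQ (Pi.single p 1)) :=
        Finset.sum_congr rfl fun x _ => by rw [hsingle]
    _ = _ := by
        rw [map_sum, Finset.sum_smul, ← Finset.sum_add_distrib]
        exact Finset.sum_congr rfl fun x _ => by rw [map_smul, smul_add]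

lemma ker_syndrome_le_Ceps (hm : 3 ≤ m) : LinearMap.ker (syndrome m ε) ≤ Ceps m ε := by
  intro w hw
  rw [LinearMap.mem_ker, syndrome_apply, Prod.mk_eq_zero] at hw
  obtain ⟨p, hp, -⟩ := exists_theta0_eq hm ε 0 0 0
  rw [← Submodule.Quotient.mk_eq_zero, ← Submodule.mkQ_apply, mkQ_eq_pairClassHom hm ⟨p, hp⟩]
  simp only [smul_add, Finset.sum_add_distrib, ← Finset.sum_smul, hw.1, hw.2, zero_smul, add_zero,
    map_zero]

def cosetLeaderWeight (m : ℕ) (ε : ZMod 2) (s : ZMod 2 × Vm m) : ℕ :=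
  if s.1 = 0 then (if s.2 = 0 then 0 else 2) else (if theta0 m s.2 = ε then 1 else 3)

lemma cosetLeaderWeight_syndrome_chi (S : Finset (Veps m ε)) :
    cosetLeaderWeight m ε (syndrome m ε (chi S)) =
      if Even S.card then (if (∑ x ∈ S, (x : Vm m)) = 0 then 0 else 2)
      else (if theta0 m (∑ x ∈ S, (x : Vm m)) = ε then 1 else 3) := by
  simp only [cosetLeaderWeight, syndrome_chi, ZMod.natCast_eq_zero_iff_even]

lemma cosetLeaderWeight_le_three (s : ZMod 2 × Vm m) : cosetLeaderWeight m ε s ≤ 3 := by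
  unfold cosetLeaderWeight
  split_ifs <;> omega

lemma cosetLeaderWeight_syndrome_chi_le_card (S : Finset (Veps m ε)) :
    cosetLeaderWeight m ε (syndrome m ε (chi S)) ≤ S.card := by
  obtain h | h | h | h : S.card = 0 ∨ S.card = 1 ∨ S.card = 2 ∨ 3 ≤ S.card := by omega
  · simp [Finset.card_eq_zero.mp h, syndrome_chi, cosetLeaderWeight]
  · obtain ⟨a, rfl⟩ := Finset.card_eq_one.mp h
    simp [syndrome_chi, cosetLeaderWeight, a.2]
  · have h2 : ((2 : ℕ) : ZMod 2) = 0 := rfl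
    rw [syndrome_chi, h, h2, cosetLeaderWeight, if_pos rfl]
    split_ifs <;> omega
  · exact (cosetLeaderWeight_le_three _).trans h

lemma cosetLeaderWeight_le_hammingNorm (w : Veps m ε → ZMod 2) :
    cosetLeaderWeight m ε (syndrome m ε w) ≤ hammingNorm w := by
  obtain ⟨S, rfl⟩ := exists_chi_eq w
  rw [hammingNorm_chi]
  exact cosetLeaderWeight_syndrome_chi_le_card S

lemma exists_syndrome_chi_eq (hm : 3 ≤ m) (s : ZMod 2 × Vm m) :
    ∃ S : Finset (Veps m ε), syndrome m ε (chi S) = s ∧ S.card = cosetLeaderWeight m ε s := by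
  obtain ⟨p, v⟩ := s
  simp only [syndrome_chi, Prod.mk.injEq, cosetLeaderWeight]
  obtain rfl | rfl : p = 0 ∨ p = 1 := by revert p; decide
  · by_cases hv : v = 0
    · exact ⟨∅, by simp [hv]⟩
    obtain ⟨a, b, hab, rfl⟩ := exists_ne_add_eq hm ε hv
    exact ⟨{a, b}, by simp [hab, hv]; rfl⟩
  by_cases hv : theta0 m v = ε
  · exact ⟨{⟨v, hv⟩}, by simp [hv]⟩
  -- three points `z, a, b` with `a + b = v + z`; `z` differs from `a` and `b` since `v ∉ V^ε`
  obtain ⟨z, hz, -⟩ := exists_theta0_eq hm ε 0 0 0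
  have hvz : v + z ≠ 0 := fun h => hv ((eq_of_add_eq_zero_of_zmod_two h).symm ▸ hz)
  obtain ⟨a, b, hab, habvz⟩ := exists_ne_add_eq hm ε hvz
  have hza : (⟨z, hz⟩ : Veps m ε) ≠ a := by
    rintro rfl
    exact hv (add_left_cancel (habvz.trans (add_comm _ _)) ▸ b.2)
  have hzb : (⟨z, hz⟩ : Veps m ε) ≠ b := by
    rintro rfl
    exact hv (add_right_cancel habvz ▸ a.2)
  refine ⟨{⟨z, hz⟩, a, b}, ⟨?_, ?_⟩, ?_⟩
  · simp [hza, hzb, hab]; rfl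
  · rw [Finset.sum_insert (by simp [hza, hzb]), Finset.sum_pair hab, habvz, add_left_comm,
      ZModModule.add_self, add_zero]
  · simp [hza, hzb, hab, hv]

theorem exists_mem_Ceps_hammingDist_eq (hm : 3 ≤ m) (w : Veps m ε → ZMod 2) :
    ∃ c ∈ Ceps m ε, hammingDist w c = cosetLeaderWeight m ε (syndrome m ε w) := by
  obtain ⟨S, hS, hcard⟩ := exists_syndrome_chi_eq hm (syndrome m ε w)
  refine ⟨w + chi S, ker_syndrome_le_Ceps hm ?_, ?_⟩
  · rw [LinearMap.mem_ker, map_add, hS, ZModModule.add_self]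
  · rw [hammingDist_eq_hammingNorm, neg_add_cancel_left, hammingNorm_chi, hcard]

theorem cosetLeaderWeight_le_hammingDist {w c : Veps m ε → ZMod 2} (hc : c ∈ Ceps m ε) :
    cosetLeaderWeight m ε (syndrome m ε w) ≤ hammingDist w c := by
  have hsyn : syndrome m ε (-w + c) = syndrome m ε w := by
    rw [map_add, map_neg, LinearMap.mem_ker.mp (Ceps_le_ker_syndrome hc), add_zero,
      ZModModule.neg_eq_self]
  rw [hammingDist_eq_hammingNorm, ← hsyn]
  exact cosetLeaderWeight_le_hammingNorm _

end

theorem stmt_14 (m : ℕ) (hm : 4 ≤ m) (ε : ZMod 2) :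
    (∀ S : Finset (Veps m ε),
        (∃ c ∈ Ceps m ε, hammingDist (chi S) c =
            (if Even S.card then (if (∑ x ∈ S, (x : Vm m)) = 0 then 0 else 2)
             else (if theta0 m (∑ x ∈ S, (x : Vm m)) = ε then 1 else 3))) ∧
        (∀ c ∈ Ceps m ε,
            (if Even S.card then (if (∑ x ∈ S, (x : Vm m)) = 0 then 0 else 2)
             else (if theta0 m (∑ x ∈ S, (x : Vm m)) = ε then 1 else 3)) ≤
          hammingDist (chi S) c)) ∧
    (∀ w : Veps m ε → ZMod 2, ∃ c ∈ Ceps m ε, hammingDist w c ≤ 3) ∧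
    (∃ w : Veps m ε → ZMod 2, ∀ c ∈ Ceps m ε, 3 ≤ hammingDist w c) := by
  have hm3 : 3 ≤ m := by omega
  refine ⟨fun S => ?_, fun w => ?_, ?_⟩
  · rw [← cosetLeaderWeight_syndrome_chi]
    exact ⟨exists_mem_Ceps_hammingDist_eq hm3 _, fun c hc => cosetLeaderWeight_le_hammingDist hc⟩
  · obtain ⟨c, hc, hdist⟩ := exists_mem_Ceps_hammingDist_eq hm3 w
    exact ⟨c, hc, hdist ▸ cosetLeaderWeight_le_three _⟩
  · obtain ⟨v, hv, -⟩ := exists_theta0_eq hm3 (ε + 1) 0 0 0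
    obtain ⟨S, hS, -⟩ := exists_syndrome_chi_eq (ε := ε) hm3 (1, v)
    have h3 : cosetLeaderWeight m ε (1, v) = 3 := by simp [cosetLeaderWeight, hv]
    exact ⟨chi S, fun c hc => h3 ▸ hS ▸ cosetLeaderWeight_le_hammingDist hc⟩
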